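/- Let α be strictly increasing on (a,b) and f regulated on (a,b). If at some point x ∈ (a,b) the derivative (D_α f)(x) exists and α^-(x) ≠ α^+(x), then (D_α f)(x) = (f^+(x) - f^-(x)) / (α^+(x) - α^-(x)). -/

import Mathlib

open Filter Topology Function Set MeasureTheory

/-- `x` lies in the interval `(a, b)` with extended-real endpoints. -/
def MemI (a b : EReal) (x : ℝ) : Prop := a < (x : EReal) ∧ (x : EReal) < b

/-- `f` is regulated on `(a, b)`: both one-sided limits exist (as real numbers)
at every point of `(a, b)`. -/
def RegulatedOn' (f : ℝ → ℝ) (a b : EReal) : Prop :=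
  ∀ x : ℝ, MemI a b x →
    (∃ L : ℝ, Tendsto f (𝓝[<] x) (𝓝 L)) ∧ ∃ R : ℝ, Tendsto f (𝓝[>] x) (𝓝 R)

/-- The symmetric `α`-derivative of `f` at `x` equals `A`:
`(D_α f)(x) = lim_{h↓0} (f⁻(x+h) - f⁺(x-h)) / (α⁻(x+h) - α⁺(x-h))`. -/
def HasDerivAlpha (f α : ℝ → ℝ) (x A : ℝ) : Prop :=
  Tendsto (fun h : ℝ =>
      (leftLim f (x + h) - rightLim f (x - h)) /
        (leftLim α (x + h) - rightLim α (x - h)))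
    (𝓝[>] (0 : ℝ)) (𝓝 A)

/-- The filter of real numbers approaching `b : EReal` from the left (`x ↑ b`). -/
noncomputable def leftFilter (b : EReal) : Filter ℝ := comap (fun x : ℝ => (x : EReal)) (𝓝[<] b)

/-- The filter of real numbers approaching `a : EReal` from the right (`x ↓ a`). -/
noncomputable def rightFilter (a : EReal) : Filter ℝ := comap (fun x : ℝ => (x : EReal)) (𝓝[>] a)

/-! As `h ↓ 0`, `f⁻(x + h) → f⁺(x)` and `f⁺(x - h) → f⁻(x)`, and likewise for `α`, which has
one-sided limits because it is monotone. When `α⁻(x) ≠ α⁺(x)` the limit of the denominators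
is nonzero, so the difference quotients defining `(D_α f)(x)` converge to
`(f⁺(x) - f⁻(x)) / (α⁺(x) - α⁻(x))`, which is therefore its value. -/

section LeftRightLim

variable {α β : Type*} [LinearOrder α] [TopologicalSpace α] [OrderTopology α]

/-- `leftLim f y` is a cluster point of `f` on `(y - ε, y]`, so it stays in every closed
neighbourhood of `b` that `f` eventually enters on the right of `a`. -/
theorem tendsto_leftLim_nhdsGT [TopologicalSpace β] [T3Space β] {f : α → β} {a : α} {b : β}
    (h : Tendsto f (𝓝[>] a) (𝓝 b)) : Tendsto (leftLim f) (𝓝[>] a) (𝓝 b) := by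
  refine (closed_nhds_basis b).tendsto_right_iff.2 fun s ⟨hs, hs_closed⟩ => ?_
  filter_upwards [eventually_eventually_nhdsWithin.2 (h hs), self_mem_nhdsWithin] with y hy hay
  rw [isOpen_Ioi.nhdsWithin_eq hay] at hy
  exact hs_closed.mem_of_mapClusterPt (mapClusterPt_leftLim f y) (nhdsWithin_le_nhds hy)

theorem tendsto_rightLim_nhdsLT [TopologicalSpace β] [T3Space β] {f : α → β} {a : α} {b : β}
    (h : Tendsto f (𝓝[<] a) (𝓝 b)) : Tendsto (rightLim f) (𝓝[<] a) (𝓝 b) :=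
  tendsto_leftLim_nhdsGT (α := αᵒᵈ) h

variable [ConditionallyCompleteLinearOrder β] [TopologicalSpace β] [OrderTopology β]

theorem MonotoneOn.exists_tendsto_nhdsLT {f : α → β} {s : Set α} {x : α}
    (hf : MonotoneOn f s) (hs : s ∈ 𝓝[≤] x) : ∃ L, Tendsto f (𝓝[<] x) (𝓝 L) := by
  rcases eq_or_neBot (𝓝[<] x) with hbot | hne
  · exact ⟨f x, by simp [hbot]⟩
  obtain ⟨y, hyx⟩ := Filter.nonempty_of_mem (self_mem_nhdsWithin (s := Iio x) (a := x))
  obtain ⟨z, hzx, hsub⟩ := (mem_nhdsLE_iff_exists_Ioc_subset' hyx).1 hs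
  have hIoo : Ioo z x ⊆ s := Ioo_subset_Ioc_self.trans hsub
  refine ⟨_, hf.mono hIoo |>.tendsto_nhdsWithin_Ioo_left
    (Filter.nonempty_of_mem (Ioo_mem_nhdsLT hzx)) ⟨f x, ?_⟩⟩
  rintro _ ⟨t, ht, rfl⟩
  exact hf (hIoo ht) (hsub ⟨hzx, le_rfl⟩) ht.2.le

theorem MonotoneOn.exists_tendsto_nhdsGT {f : α → β} {s : Set α} {x : α}
    (hf : MonotoneOn f s) (hs : s ∈ 𝓝[≥] x) : ∃ R, Tendsto f (𝓝[>] x) (𝓝 R) :=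
  MonotoneOn.exists_tendsto_nhdsLT (α := αᵒᵈ) (β := βᵒᵈ) hf.dual hs

end LeftRightLim

section OrderedGroup

variable {G : Type*} [AddCommGroup G] [LinearOrder G] [IsOrderedAddMonoid G] [TopologicalSpace G]
  [IsTopologicalAddGroup G]

theorem tendsto_add_nhdsGT_zero (x : G) : Tendsto (x + ·) (𝓝[>] 0) (𝓝[>] x) :=
  tendsto_nhdsWithin_of_tendsto_nhds_of_eventually_within _
    (((continuous_const_add x).tendsto' 0 x (add_zero x)).mono_left nhdsWithin_le_nhds)
    (eventually_nhdsWithin_of_forall fun _ hh => lt_add_of_pos_right x hh)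

theorem tendsto_sub_nhdsGT_zero (x : G) : Tendsto (x - ·) (𝓝[>] 0) (𝓝[<] x) :=
  tendsto_nhdsWithin_of_tendsto_nhds_of_eventually_within _
    (((continuous_sub_left x).tendsto' 0 x (sub_zero x)).mono_left nhdsWithin_le_nhds)
    (eventually_nhdsWithin_of_forall fun _ hh => sub_lt_self x hh)

end OrderedGroup

theorem isOpen_setOf_memI (a b : EReal) : IsOpen {x : ℝ | MemI a b x} :=
  isOpen_Ioo.preimage continuous_coe_real_ereal

theorem hasDerivAlpha_of_exists_tendsto {f α : ℝ → ℝ} {x : ℝ}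
    (hfl : ∃ L, Tendsto f (𝓝[<] x) (𝓝 L)) (hfr : ∃ R, Tendsto f (𝓝[>] x) (𝓝 R))
    (hαl : ∃ L, Tendsto α (𝓝[<] x) (𝓝 L)) (hαr : ∃ R, Tendsto α (𝓝[>] x) (𝓝 R))
    (hjump : leftLim α x ≠ rightLim α x) :
    HasDerivAlpha f α x ((rightLim f x - leftLim f x) / (rightLim α x - leftLim α x)) := by
  have hleft {g : ℝ → ℝ} (hg : ∃ R, Tendsto g (𝓝[>] x) (𝓝 R)) :
      Tendsto (fun h => leftLim g (x + h)) (𝓝[>] 0) (𝓝 (rightLim g x)) :=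
    (tendsto_leftLim_nhdsGT (tendsto_rightLim_of_tendsto hg)).comp (tendsto_add_nhdsGT_zero x)
  have hright {g : ℝ → ℝ} (hg : ∃ L, Tendsto g (𝓝[<] x) (𝓝 L)) :
      Tendsto (fun h => rightLim g (x - h)) (𝓝[>] 0) (𝓝 (leftLim g x)) :=
    (tendsto_rightLim_nhdsLT (tendsto_leftLim_of_tendsto hg)).comp (tendsto_sub_nhdsGT_zero x)
  exact ((hleft hfr).sub (hright hfl)).div ((hleft hαr).sub (hright hαl)) (sub_ne_zero.2 hjump.symm)

theorem stmt5_general (a b : EReal) (f α : ℝ → ℝ)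
    (hf : RegulatedOn' f a b) (hα : StrictMonoOn α {x : ℝ | MemI a b x})
    (x A : ℝ) (hx : MemI a b x) (hD : HasDerivAlpha f α x A)
    (hjump : leftLim α x ≠ rightLim α x) :
    A = (rightLim f x - leftLim f x) / (rightLim α x - leftLim α x) := by
  have hI : {x : ℝ | MemI a b x} ∈ 𝓝 x := (isOpen_setOf_memI a b).mem_nhds hx
  obtain ⟨hfl, hfr⟩ := hf x hx
  exact tendsto_nhds_unique hD <| hasDerivAlpha_of_exists_tendsto hfl hfr
    (hα.monotoneOn.exists_tendsto_nhdsLT (mem_nhdsWithin_of_mem_nhds hI))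
    (hα.monotoneOn.exists_tendsto_nhdsGT (mem_nhdsWithin_of_mem_nhds hI)) hjump

/-- If `(D_α f)(x)` exists and `α⁻(x) ≠ α⁺(x)`, then
`(D_α f)(x) = (f⁺(x) - f⁻(x)) / (α⁺(x) - α⁻(x))`. -/
theorem stmt5 (a b : EReal) (hab : a < b) (f α : ℝ → ℝ)
    (hf : RegulatedOn' f a b) (hα : StrictMonoOn α {x : ℝ | MemI a b x})
    (x A : ℝ) (hx : MemI a b x) (hD : HasDerivAlpha f α x A)
    (hjump : leftLim α x ≠ rightLim α x) :
    A = (rightLim f x - leftLim f x) / (rightLim α x - leftLim α x) :=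
  stmt5_general a b f α hf hα x A hx hD hjump
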